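/- Let Ω = { x ∈ ℝ⁴ : x₄ > √(x₁²+x₂²+x₃²) }, τ(x) = √(x₄² − x₁² − x₂² − x₃²), and U(x) = x / τ(x). For the temperature profile T(x) = τ(x)^{−3}, the heat-flow vector vanishes identically on Ω: (grad T)^ν + η(grad T, U)·U^ν + T·Σ_μ U^μ ∂_μ U^ν = 0 for every ν = 1,…,4. -/

import Mathlib

open scoped BigOperators

noncomputable section

/-- Coefficients of the Minkowski metric `diag(1,1,1,−1)`
(the fourth coordinate, index `3`, is timelike). -/
def etaCoef : Fin 4 → ℝ := fun μ => if μ = 3 then -1 else 1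

/-- The Minkowski bilinear form on `ℝ⁴`: `η(v,w) = v₁w₁ + v₂w₂ + v₃w₃ − v₄w₄`. -/
def eta (v w : Fin 4 → ℝ) : ℝ := ∑ μ, etaCoef μ * v μ * w μ

/-- The components `η_{μν} = diag(1,1,1,−1)` of the Minkowski metric. -/
def etaMat (μ ν : Fin 4) : ℝ := if μ = ν then etaCoef μ else 0

/-- The partial derivative `∂_μ f (x)`. -/
def pd (μ : Fin 4) (f : (Fin 4 → ℝ) → ℝ) (x : Fin 4 → ℝ) : ℝ :=
  fderiv ℝ f x (Pi.single μ 1)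

/-- The Minkowski gradient `grad p = (∂₁p, ∂₂p, ∂₃p, −∂₄p)`. -/
def mgrad (p : (Fin 4 → ℝ) → ℝ) (x : Fin 4 → ℝ) : Fin 4 → ℝ :=
  fun ν => etaCoef ν * pd ν p x

/-- The relativistic Euler equations for the triple `(U, ρ, p)` on `Ω`:
`(ρ+p)·Σ_μ U^μ ∂_μ U^ν + (grad p)^ν + η(grad p, U)·U^ν = 0`. -/
def EulerEqs (Ω : Set (Fin 4 → ℝ)) (U : (Fin 4 → ℝ) → Fin 4 → ℝ)
    (ρ p : (Fin 4 → ℝ) → ℝ) : Prop :=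
  ∀ x ∈ Ω, ∀ ν : Fin 4,
    (ρ x + p x) * (∑ μ, U x μ * pd μ (fun y => U y ν) x)
      + mgrad p x ν + eta (mgrad p x) (U x) * U x ν = 0

/-- Conservation of energy along flow lines:
`(ρ+p)·Σ_μ ∂_μ U^μ + Σ_μ U^μ ∂_μ ρ = 0` on `Ω`. -/
def EnergyCons (Ω : Set (Fin 4 → ℝ)) (U : (Fin 4 → ℝ) → Fin 4 → ℝ)
    (ρ p : (Fin 4 → ℝ) → ℝ) : Prop :=
  ∀ x ∈ Ω,
    (ρ x + p x) * (∑ μ, pd μ (fun y => U y μ) x) + (∑ μ, U x μ * pd μ ρ x) = 0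

/-- The interior of the forward light cone in Minkowski `ℝ⁴`. -/
def lightcone : Set (Fin 4 → ℝ) :=
  {x | Real.sqrt ((x 0) ^ 2 + (x 1) ^ 2 + (x 2) ^ 2) < x 3}

/-- `τ(x) = √(x₄² − x₁² − x₂² − x₃²)`. -/
def tau (x : Fin 4 → ℝ) : ℝ :=
  Real.sqrt ((x 3) ^ 2 - (x 0) ^ 2 - (x 1) ^ 2 - (x 2) ^ 2)

/-- The extended Hwa–Bjorken flow vector field `U(x) = x / τ(x)`. -/
def Ubj (x : Fin 4 → ℝ) : Fin 4 → ℝ := fun μ => x μ / tau x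


/-!
Both parts of the heat flow vanish separately. The temperature depends on `x` only through
`τ`, and `grad τ = −U`, so `grad T = 3 τ⁻⁴ U` is parallel to `U`; as `η(U, U) = −1`, its
component orthogonal to `U` is zero. The flow `U` is homogeneous of degree `0`,
`U(t x) = U(x)` for `t > 0`, so its derivative in the direction `x`, and hence along
`U = x / τ`, vanishes: `∇_U U = 0`.
-/

open Filter Topology

lemma etaCoef_mul_self (μ : Fin 4) : etaCoef μ * etaCoef μ = 1 := by
  unfold etaCoef; split_ifs <;> norm_num

lemma eta_smul_left (c : ℝ) (v w : Fin 4 → ℝ) : eta (c • v) w = c * eta v w := by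
  simp only [eta, Finset.mul_sum, Pi.smul_apply, smul_eq_mul]
  exact Finset.sum_congr rfl fun _ _ => by ring

lemma eta_smul_right (c : ℝ) (v w : Fin 4 → ℝ) : eta v (c • w) = c * eta v w := by
  simp only [eta, Finset.mul_sum, Pi.smul_apply, smul_eq_mul]
  exact Finset.sum_congr rfl fun _ _ => by ring

lemma tau_eq_sqrt_neg_eta (x : Fin 4 → ℝ) : tau x = Real.sqrt (-eta x x) := by
  simp only [tau, eta, etaCoef, Fin.sum_univ_four, Fin.reduceEq, ↓reduceIte]
  ring_nf

lemma tau_pos_of_mem_lightcone {x : Fin 4 → ℝ} (hx : x ∈ lightcone) : 0 < tau x := by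
  have hx3 : 0 < x 3 := (Real.sqrt_nonneg _).trans_lt hx
  have := (Real.sqrt_lt' hx3).mp hx
  exact Real.sqrt_pos.2 (by linarith)

lemma tau_sq {x : Fin 4 → ℝ} (hx : 0 < tau x) : tau x ^ 2 = -eta x x := by
  rw [tau_eq_sqrt_neg_eta] at hx ⊢
  exact Real.sq_sqrt (Real.sqrt_pos.1 hx).le

lemma tau_smul {t : ℝ} (ht : 0 ≤ t) (x : Fin 4 → ℝ) : tau (t • x) = t * tau x := by
  rw [tau_eq_sqrt_neg_eta, tau_eq_sqrt_neg_eta, eta_smul_left, eta_smul_right, ← mul_assoc,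
    ← mul_neg, Real.sqrt_mul (mul_self_nonneg t), Real.sqrt_mul_self ht]

lemma Ubj_eq_smul (x : Fin 4 → ℝ) : Ubj x = (tau x)⁻¹ • x := by
  funext μ
  simp [Ubj, div_eq_inv_mul]

lemma Ubj_smul {t : ℝ} (ht : 0 < t) (x : Fin 4 → ℝ) : Ubj (t • x) = Ubj x := by
  funext μ
  simp only [Ubj, tau_smul ht.le, Pi.smul_apply, smul_eq_mul, mul_div_mul_left _ _ ht.ne']

lemma eta_Ubj_self {x : Fin 4 → ℝ} (hx : 0 < tau x) : eta (Ubj x) (Ubj x) = -1 := by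
  rw [Ubj_eq_smul, eta_smul_left, eta_smul_right, ← neg_neg (eta x x), ← tau_sq hx]
  field_simp

def etaL (x : Fin 4 → ℝ) : (Fin 4 → ℝ) →L[ℝ] ℝ :=
  ∑ μ, (etaCoef μ * x μ) • ContinuousLinearMap.proj μ

lemma etaL_apply (x v : Fin 4 → ℝ) : etaL x v = eta x v := by
  simp [etaL, eta]

lemma hasFDerivAt_eta_self (x : Fin 4 → ℝ) :
    HasFDerivAt (fun y => eta y y) (2 • etaL x) x := by
  have h := HasFDerivAt.fun_sum (u := Finset.univ) fun μ _ =>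
    ((hasFDerivAt_apply (𝕜 := ℝ) μ x).const_mul (etaCoef μ)).mul
      (hasFDerivAt_apply (𝕜 := ℝ) μ x)
  refine h.congr_fderiv ?_
  ext v
  simp only [etaL, sum_apply, add_apply, smul_apply, ContinuousLinearMap.proj_apply,
    smul_eq_mul, nsmul_eq_mul, Nat.cast_ofNat, Finset.mul_sum]
  exact Finset.sum_congr rfl fun _ _ => by ring

lemma hasFDerivAt_tau {x : Fin 4 → ℝ} (hx : 0 < tau x) :
    HasFDerivAt tau (-(tau x)⁻¹ • etaL x) x := by
  have hq : -eta x x ≠ 0 := by rw [← tau_sq hx]; positivity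
  have h := (Real.hasDerivAt_sqrt hq).comp_hasFDerivAt x (hasFDerivAt_eta_self x).neg
  rw [← tau_eq_sqrt_neg_eta] at h
  refine (h.congr_fderiv ?_).congr_of_eventuallyEq (.of_forall tau_eq_sqrt_neg_eta)
  ext v
  simp only [one_div, mul_inv_rev, smul_neg, neg_apply, smul_apply, nsmul_eq_mul,
    Nat.cast_ofNat, smul_eq_mul, neg_mul, neg_inj]
  field_simp

lemma pd_tau {x : Fin 4 → ℝ} (hx : 0 < tau x) (μ : Fin 4) :
    pd μ tau x = -(etaCoef μ * x μ) / tau x := by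
  rw [pd, (hasFDerivAt_tau hx).fderiv, smul_apply, etaL_apply, smul_eq_mul, neg_mul,
    inv_mul_eq_div, neg_div]
  simp [eta, Pi.single_apply]

lemma mgrad_tau {x : Fin 4 → ℝ} (hx : 0 < tau x) : mgrad tau x = -Ubj x := by
  funext ν
  rw [mgrad, pd_tau hx, Pi.neg_apply, Ubj, mul_div_assoc', mul_neg, ← mul_assoc,
    etaCoef_mul_self, one_mul, neg_div]

lemma mgrad_comp {f : ℝ → ℝ} {f' : ℝ} {g : (Fin 4 → ℝ) → ℝ} {x : Fin 4 → ℝ}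
    (hf : HasDerivAt f f' (g x)) (hg : DifferentiableAt ℝ g x) :
    mgrad (fun y => f (g y)) x = f' • mgrad g x := by
  funext ν
  have hfg : HasFDerivAt (fun y => f (g y)) (f' • fderiv ℝ g x) x :=
    hf.comp_hasFDerivAt x hg.hasFDerivAt
  simp only [mgrad, pd, hfg.fderiv, Pi.smul_apply, smul_apply, smul_eq_mul]
  ring

lemma mgrad_inv_tau_pow_three {x : Fin 4 → ℝ} (hx : 0 < tau x) :
    mgrad (fun y => (tau y ^ 3)⁻¹) x = (3 / tau x ^ 4) • Ubj x := by
  have hf : HasDerivAt (fun t : ℝ => (t ^ 3)⁻¹) _ (tau x) :=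
    (hasDerivAt_pow 3 (tau x)).inv (by positivity)
  rw [mgrad_comp hf (hasFDerivAt_tau hx).differentiableAt, mgrad_tau hx, smul_neg, ← neg_smul]
  congr 1
  field_simp
  ring

lemma smul_add_eta_smul_mul_eq_zero {u : Fin 4 → ℝ} (hu : eta u u = -1) (c : ℝ) (ν : Fin 4) :
    (c • u) ν + eta (c • u) u * u ν = 0 := by
  rw [eta_smul_left, hu, Pi.smul_apply, smul_eq_mul]
  ring

lemma sum_mul_pd_eq_fderiv (f : (Fin 4 → ℝ) → ℝ) (x v : Fin 4 → ℝ) :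
    ∑ μ, v μ * pd μ f x = fderiv ℝ f x v := by
  conv_rhs => rw [pi_eq_sum_univ' v]
  simp only [map_sum, map_smul, smul_eq_mul, pd]

lemma fderiv_apply_self_eq_zero_of_eventually_smul_eq {E F : Type*} [NormedAddCommGroup E]
    [NormedSpace ℝ E] [NormedAddCommGroup F] [NormedSpace ℝ F] {f : E → F} {x : E}
    (hf : DifferentiableAt ℝ f x) (hinv : ∀ᶠ t in 𝓝 (1 : ℝ), f (t • x) = f x) :
    fderiv ℝ f x x = 0 := by
  have hline : HasDerivAt (fun t : ℝ => f (t • x)) (fderiv ℝ f x x) 1 := by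
    have h := hf.hasFDerivAt.comp_hasDerivAt_of_eq (1 : ℝ)
      ((hasDerivAt_id (1 : ℝ)).smul_const x) (by simp)
    rwa [one_smul] at h
  exact hline.unique ((hasDerivAt_const (1 : ℝ) (f x)).congr_of_eventuallyEq hinv)

lemma sum_Ubj_mul_pd_Ubj {x : Fin 4 → ℝ} (hx : 0 < tau x) (ν : Fin 4) :
    ∑ μ, Ubj x μ * pd μ (fun y => Ubj y ν) x = 0 := by
  have hdiff : DifferentiableAt ℝ (fun y => Ubj y ν) x := by
    simp only [Ubj, div_eq_mul_inv]
    exact (differentiableAt_apply ν x).mul ((hasFDerivAt_tau hx).differentiableAt.inv hx.ne')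
  have hinv : ∀ᶠ t in 𝓝 (1 : ℝ), Ubj (t • x) ν = Ubj x ν := by
    filter_upwards [lt_mem_nhds one_pos] with t ht
    rw [Ubj_smul ht]
  rw [sum_mul_pd_eq_fderiv, Ubj_eq_smul, map_smul,
    fderiv_apply_self_eq_zero_of_eventually_smul_eq hdiff hinv, smul_zero]

/-- for the temperature profile `T = τ^{−3}`, the heat-flow
vector `Q = grad^H T + T·∇_U U` of the flow `U = x/τ` vanishes. -/
theorem statement10 :
    ∀ x ∈ lightcone, ∀ ν : Fin 4,
      mgrad (fun y => (tau y ^ 3)⁻¹) x ν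
        + eta (mgrad (fun y => (tau y ^ 3)⁻¹) x) (Ubj x) * Ubj x ν
        + (tau x ^ 3)⁻¹ * (∑ μ, Ubj x μ * pd μ (fun y => Ubj y ν) x) = 0 := by
  intro x hx ν
  have hτ := tau_pos_of_mem_lightcone hx
  rw [sum_Ubj_mul_pd_Ubj hτ, mul_zero, add_zero, mgrad_inv_tau_pow_three hτ]
  exact smul_add_eta_smul_mul_eq_zero (eta_Ubj_self hτ) _ ν
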